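/- arXiv:1812.02072 — 2 statements merged into one kernel-verified Lean document; each statement's English description precedes it below -/
import Mathlib

section
/- For integers n ≥ 2, define C_n = H_{n-1,1}^2/H_{n-1,2}. For every partition λ = (n_1, ..., n_m) of an integer n with all parts n_i ≥ 2, ∑_{i=1}^m C_{n_i} ≤ (121/196)·n. -/
/-!
Termwise, it suffices that `C (m + 1) ≤ c (m + 1)` with `c = 121/196 = (11/14)²`, i.e.
`H_{m,1}² ≤ c (m + 1) H_{m,2}` for `m ≥ 1`; equality holds at `m = 3`, so `c` is optimal.
This is proved by induction on `m`: going from `m` to `m + 1`, the left side grows by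
`2 H_{m,1}/(m+1) + 1/(m+1)²` and the right side by `c H_{m,2} + c (m+2)/(m+1)²`.
With the crude bounds `H_{m,2} ≥ 1` and `H_{m,1} ≤ m/4 + 13/12` (slope `1/4 < c/2`) the step
closes once `m ≥ 9`, and the cases `m ≤ 9` are checked numerically.
-/

noncomputable def H (m j : ℕ) : ℝ := ∑ i ∈ Finset.Icc 1 m, (1 : ℝ) / (i : ℝ) ^ j

noncomputable def C (n : ℕ) : ℝ := (H (n - 1) 1) ^ 2 / H (n - 1) 2

theorem H_succ (m j : ℕ) : H (m + 1) j = H m j + 1 / ((m : ℝ) + 1) ^ j := by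
  rw [H, H, Finset.sum_Icc_succ_top (by omega)]
  push_cast
  rfl

theorem one_le_H {m : ℕ} (hm : 1 ≤ m) (j : ℕ) : 1 ≤ H m j := by
  have h := Finset.single_le_sum (f := fun i : ℕ => (1 : ℝ) / (i : ℝ) ^ j)
    (fun i _ => by positivity) (Finset.mem_Icc.mpr ⟨le_rfl, hm⟩)
  simpa [H] using h

theorem H_one_le (m : ℕ) : H m 1 ≤ m / 4 + 13 / 12 := by
  induction m with
  | zero => norm_num [H]
  | succ k ih =>
    rcases Nat.lt_or_ge k 3 with hk | hk
    · interval_cases k <;> norm_num [H, Finset.sum_Icc_succ_top]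
    · have hk' : (3 : ℝ) ≤ k := by exact_mod_cast hk
      have hterm : 1 / ((k : ℝ) + 1) ≤ 1 / 4 := by
        rw [div_le_div_iff₀ (by positivity) (by norm_num)]
        linarith
      rw [H_succ, pow_one]
      push_cast
      linarith

theorem H_one_sq_le {m : ℕ} (hm : 1 ≤ m) :
    H m 1 ^ 2 ≤ 121 / 196 * ((m : ℝ) + 1) * H m 2 := by
  rcases Nat.lt_or_ge m 9 with hm9 | hm9
  · interval_cases m <;> norm_num [H, Finset.sum_Icc_succ_top]
  clear hm
  induction m, hm9 using Nat.le_induction with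
  | base => norm_num [H, Finset.sum_Icc_succ_top]
  | succ k hk ih =>
    have hB := one_le_H (m := k) (by omega) 2
    have hA := H_one_le k
    rw [H_succ, H_succ, pow_one]
    push_cast
    set v : ℝ := (k : ℝ) + 1 with hv
    have hv10 : 10 ≤ v := by rw [hv]; exact_mod_cast Nat.succ_le_succ hk
    set A := H k 1
    set B := H k 2
    -- the step, cleared of the denominators `v` and `v²`
    have step : (v * A + 1) ^ 2 ≤ 121 / 196 * (v + 1) * (v ^ 2 * B + 1) := by
      have hAv : A ≤ v / 4 + 5 / 6 := by linarith
      nlinarith [mul_le_mul_of_nonneg_left ih (sq_nonneg v),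
        mul_le_mul_of_nonneg_left hAv (by positivity : (0 : ℝ) ≤ 2 * v)]
    have hv0 : 0 < v := by linarith
    calc (A + 1 / v) ^ 2 = (v * A + 1) ^ 2 / v ^ 2 := by field_simp
      _ ≤ 121 / 196 * (v + 1) * (v ^ 2 * B + 1) / v ^ 2 := by gcongr
      _ = 121 / 196 * (v + 1) * (B + 1 / v ^ 2) := by field_simp

theorem C_le {n : ℕ} (hn : 2 ≤ n) : C n ≤ 121 / 196 * n := by
  obtain ⟨m, rfl⟩ : ∃ m, n = m + 1 := ⟨n - 1, by omega⟩
  have hB : 0 < H m 2 := lt_of_lt_of_le one_pos (one_le_H (by omega) 2)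
  rw [C, Nat.add_sub_cancel, div_le_iff₀ hB]
  push_cast
  linarith [H_one_sq_le (m := m) (by omega)]

theorem sum_C_le_bound (l : Multiset ℕ) (hl : ∀ x ∈ l, 2 ≤ x) :
    (l.map C).sum ≤ (121 / 196 : ℝ) * l.sum := by
  calc (l.map C).sum ≤ (l.map fun n : ℕ => (121 / 196 : ℝ) * n).sum :=
        Multiset.sum_map_le_sum_map _ _ fun n hn => C_le (hl n hn)
    _ = 121 / 196 * l.sum := by rw [Multiset.sum_map_mul_left, Nat.cast_multiset_sum]
end

section
/- For every integer j ≥ 2 with j ≠ 4, the 'reduced cost' −C_j + j·C_4/4 is strictly positive, where C_j = H_{j-1,1}^2/H_{j-1,2}. -/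
/-!
Since `C 4 = 121/49`, the claim is `C j < 121 j / 196`. From `H m 1 ≤ 1 + log m` and
`log x ≤ √x / 2 + 2 log 4 - 2` one gets `H m 1 ^ 2 < m + 1` for `m ≥ 16`, while
`H m 2 ≥ H 40 2 > 196/121` once `m ≥ 40`; this settles `j ≥ 41`, and the finitely many
remaining `j` are checked by exact rational arithmetic.
-/

lemma H_eq_sum_range (m j : ℕ) : H m j = ∑ i ∈ Finset.range m, (1 : ℝ) / ((i : ℝ) + 1) ^ j := by
  rw [H, ← Finset.Ico_add_one_right_eq_Icc, Finset.sum_Ico_eq_sum_range]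
  norm_num [add_comm]

lemma H_one_eq_harmonic (m : ℕ) : H m 1 = (harmonic m : ℝ) := by
  rw [H, harmonic_eq_sum_Icc]
  push_cast
  simp [one_div]

lemma H_nonneg (m j : ℕ) : 0 ≤ H m j := by
  rw [H]; positivity

lemma H_mono (j : ℕ) : Monotone (fun m => H m j) := fun _ _ hmn =>
  Finset.sum_le_sum_of_subset_of_nonneg (Finset.Icc_subset_Icc_right hmn)
    fun _ _ _ => by positivity

lemma Real.log_le_sqrt_div_two_add {x : ℝ} (hx : 0 < x) :
    Real.log x ≤ √x / 2 + 2 * Real.log 4 - 2 := by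
  have hs : 0 < √x := Real.sqrt_pos.mpr hx
  have hsqrt : Real.log √x = Real.log x / 2 := Real.log_sqrt hx.le
  have hdiv : Real.log (√x / 4) = Real.log √x - Real.log 4 := Real.log_div hs.ne' (by norm_num)
  have hle : Real.log (√x / 4) ≤ √x / 4 - 1 := Real.log_le_sub_one_of_pos (by positivity)
  linarith

lemma H_one_sq_lt {m : ℕ} (hm : 16 ≤ m) : H m 1 ^ 2 < m + 1 := by
  have hlog4 : Real.log 4 < 1.3863 := by
    have : Real.log 4 = 2 * Real.log 2 := by
      rw [show (4 : ℝ) = 2 ^ 2 by norm_num, Real.log_pow]; norm_num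
    linarith [Real.log_two_lt_d9]
  have hH : H m 1 ≤ √m / 2 + 1.7726 := by
    have h₁ : H m 1 ≤ 1 + Real.log m := by
      rw [H_one_eq_harmonic]; exact_mod_cast harmonic_le_one_add_log m
    linarith [Real.log_le_sqrt_div_two_add (x := m) (by positivity)]
  have hsq : √(m : ℝ) ^ 2 = m := Real.sq_sqrt (Nat.cast_nonneg m)
  have hs : 4 ≤ √(m : ℝ) := Real.le_sqrt_of_sq_le (by norm_num; exact_mod_cast hm)
  have := pow_le_pow_left₀ (H_nonneg m 1) hH 2
  nlinarith [mul_nonneg (sub_nonneg.mpr hs) (Real.sqrt_nonneg (m : ℝ))]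

lemma H_two_ge_of_forty_le {m : ℕ} (hm : 40 ≤ m) : (196 / 121 : ℝ) ≤ H m 2 :=
  le_trans (by norm_num [H_eq_sum_range, Finset.sum_range_succ]) (H_mono 2 hm)

lemma C_four : C 4 = 121 / 49 := by
  norm_num [C, H_eq_sum_range, Finset.sum_range_succ]

lemma C_lt_of_forty_lt {j : ℕ} (hj : 40 < j) : C j < 121 / 196 * j := by
  have hj' : ((j - 1 : ℕ) : ℝ) + 1 = j := by
    rw [Nat.cast_sub (by omega)]; ring
  have hH2 := H_two_ge_of_forty_le (m := j - 1) (by omega)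
  have hH1 := H_one_sq_lt (m := j - 1) (by omega)
  rw [hj'] at hH1
  rw [C, div_lt_iff₀ (by linarith)]
  nlinarith

theorem reduced_cost_pos (j : ℕ) (hj : 2 ≤ j) (hne : j ≠ 4) :
    0 < -C j + (j : ℝ) * C 4 / 4 := by
  suffices C j < 121 / 196 * j by rw [C_four]; linarith
  rcases le_or_gt j 40 with hsmall | hlarge
  · interval_cases j <;> first
      | contradiction
      | norm_num [C, H_eq_sum_range, Finset.sum_range_succ]
  · exact C_lt_of_forty_lt hlarge
end
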